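/- Let H be a probability space, (fᵢ) a complete orthonormal system in L²(H), and (rᵢ) a Rademacher system on H. If for some C > 0 and all finite collections x₁,…,xₙ ∈ X one has C⁻¹ ∑ᵢ ‖xᵢ‖² ≤ ∫_H ‖∑ᵢ fᵢ(t)•xᵢ‖² dt, then also C⁻¹ ∑ᵢ ‖xᵢ‖² ≤ ∫_H ‖∑ᵢ rᵢ(t)•xᵢ‖² dt for all finite collections x₁,…,xₙ ∈ X. -/

import Mathlib

/-!
Each Rademacher function `r (m j)` of a sufficiently sparse choice of indices is `ε`-close in
`L²` to a finite block `∑_{i ∈ I j} ⟨fᵢ, r (m j)⟩ fᵢ` of the basis, and the blocks `I j` can be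
taken pairwise disjoint (gliding hump: `⟨fᵢ, r M⟩ → 0` as `M → ∞` for each fixed `i`).
Applying the lower estimate for `(fᵢ)` to the vectors `⟨fᵢ, r (m j)⟩ • x j`, `i ∈ I j`, and
Minkowski's inequality in `L²(X)` give
`C⁻¹ (1 - ε)² ∑ ‖x j‖² ≤ (‖∑ r (m j) • x j‖_{L²(X)} + ε ∑ ‖x j‖)²`.
Independence and equal distribution make `‖∑ r (m j) • x j‖_{L²(X)}` independent of the
injective choice `m`, and `ε → 0` concludes.
-/

open MeasureTheory Filter Topology Function
open scoped InnerProductSpace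

section Lp

variable {H : Type*} [MeasurableSpace H] {𝕜 : Type*} [NontriviallyNormedField 𝕜]
  {μ : Measure H} {X : Type*} [NormedAddCommGroup X] [NormedSpace 𝕜 X]

theorem MeasureTheory.Lp.norm_sq_eq_integral_norm_sq (u : Lp X 2 μ) :
    ‖u‖ ^ 2 = ∫ t, ‖u t‖ ^ 2 ∂μ := by
  rw [Lp.norm_def, toReal_eLpNorm (Lp.aestronglyMeasurable u),
    lpNorm_eq_integral_norm_rpow_toReal two_ne_zero ENNReal.ofNat_ne_top
      (Lp.aestronglyMeasurable u)]
  have hnonneg : 0 ≤ ∫ t, ‖u t‖ ^ (2 : ℝ) ∂μ := integral_nonneg fun _ => by positivity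
  simp only [ENNReal.toReal_ofNat, Real.rpow_ofNat] at hnonneg ⊢
  rw [← Real.rpow_natCast, ← Real.rpow_mul hnonneg]
  norm_num

variable (𝕜 μ) in
/-- The elementary tensor `g ⊗ x = (t ↦ g t • x)` of `Lᵖ(μ, 𝕜) ⊗ X ⊆ Lᵖ(μ, X)`. -/
noncomputable def lpTmul (p : ENNReal) [Fact (1 ≤ p)] : Lp 𝕜 p μ →L[𝕜] X →L[𝕜] Lp X p μ :=
  (ContinuousLinearMap.compLpL₂ p μ (ContinuousLinearMap.lsmul 𝕜 𝕜).flip).flip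

theorem lpTmul_ae_eq {p : ENNReal} [Fact (1 ≤ p)] (g : Lp 𝕜 p μ) (x : X) :
    lpTmul 𝕜 μ p g x =ᵐ[μ] fun t => g t • x :=
  ContinuousLinearMap.coeFn_compLp _ g

theorem norm_sq_sum_lpTmul {ι : Type*} (s : Finset ι) (g : ι → Lp 𝕜 2 μ) (φ : ι → H → 𝕜)
    (hg : ∀ i, g i =ᵐ[μ] φ i) (x : ι → X) :
    ‖∑ i ∈ s, lpTmul 𝕜 μ 2 (g i) (x i)‖ ^ 2 = ∫ t, ‖∑ i ∈ s, φ i t • x i‖ ^ 2 ∂μ := by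
  rw [Lp.norm_sq_eq_integral_norm_sq]
  refine integral_congr_ae ?_
  have hterm : ∀ᵐ t ∂μ, ∀ i ∈ s, lpTmul 𝕜 μ 2 (g i) (x i) t = φ i t • x i := by
    refine (ae_ball_iff s.countable_toSet).2 fun i _ => ?_
    filter_upwards [lpTmul_ae_eq (g i) (x i), hg i] with t h1 h2
    rw [h1, h2]
  filter_upwards [Lp.coeFn_fun_finsetSum s fun i => lpTmul 𝕜 μ 2 (g i) (x i), hterm]
    with t hsum ht
  rw [hsum]
  exact congrArg (‖·‖ ^ 2) (Finset.sum_congr rfl ht)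

theorem Fin.sum_ite_mem_eq_sum {M : Type*} [AddCommMonoid M] {s : Finset ℕ} {N : ℕ}
    (hN : s ⊆ Finset.range N) (g : ℕ → M) :
    ∑ i : Fin N, (if (i : ℕ) ∈ s then g i else 0) = ∑ i ∈ s, g i := by
  rw [Fin.sum_univ_eq_sum_range (fun i => if i ∈ s then g i else 0), Finset.sum_ite_mem,
    Finset.inter_eq_right.2 hN]

theorem lowerEstimate_finset_of_fin {f : ℕ → H → 𝕜} {c : ℝ}
    (h : ∀ (N : ℕ) (z : Fin N → X),
      c * ∑ i, ‖z i‖ ^ 2 ≤ ∫ t, ‖∑ i : Fin N, f i.val t • z i‖ ^ 2 ∂μ)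
    (s : Finset ℕ) (y : ℕ → X) :
    c * ∑ i ∈ s, ‖y i‖ ^ 2 ≤ ∫ t, ‖∑ i ∈ s, f i t • y i‖ ^ 2 ∂μ := by
  classical
  obtain ⟨N, hN⟩ := s.exists_nat_subset_range
  set z : Fin N → X := fun i => if (i : ℕ) ∈ s then y i else 0
  calc c * ∑ i ∈ s, ‖y i‖ ^ 2 = c * ∑ i, ‖z i‖ ^ 2 := by
        rw [← Fin.sum_ite_mem_eq_sum hN]
        simp [z, apply_ite]
    _ ≤ ∫ t, ‖∑ i : Fin N, f i.val t • z i‖ ^ 2 ∂μ := h N z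
    _ = ∫ t, ‖∑ i ∈ s, f i t • y i‖ ^ 2 ∂μ := by
        congr! 4 with t
        rw [← Fin.sum_ite_mem_eq_sum hN]
        simp [z, apply_ite]

end Lp

section L2

variable {H : Type*} [MeasurableSpace H] {μ : Measure H} {𝕜 : Type*} [RCLike 𝕜]

theorem orthonormal_toLp {ι : Type*} [DecidableEq ι] {g : ι → H → 𝕜}
    (hg : ∀ i, MemLp (g i) 2 μ)
    (horth : ∀ i j, ∫ t, g i t * (starRingEnd 𝕜) (g j t) ∂μ = if i = j then 1 else 0) :
    Orthonormal 𝕜 fun i => (hg i).toLp (g i) := by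
  rw [orthonormal_iff_ite]
  intro i j
  have hji : (if j = i then (1 : 𝕜) else 0) = if i = j then 1 else 0 := by simp only [eq_comm]
  rw [L2.inner_def, ← hji, ← horth j i]
  refine integral_congr_ae ?_
  filter_upwards [(hg i).coeFn_toLp, (hg j).coeFn_toLp] with t hi hj
  rw [hi, hj, RCLike.inner_apply, mul_comm]

theorem orthogonal_span_range_toLp_eq_bot {ι : Type*} {g : ι → H → 𝕜}
    (hg : ∀ i, MemLp (g i) 2 μ)
    (hcomplete : ∀ u : H → 𝕜, MemLp u 2 μ →
      (∀ i, ∫ t, u t * (starRingEnd 𝕜) (g i t) ∂μ = 0) → u =ᵐ[μ] 0) :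
    (Submodule.span 𝕜 (Set.range fun i => (hg i).toLp (g i)))ᗮ = ⊥ := by
  refine (Submodule.eq_bot_iff _).2 fun u hu => Lp.eq_zero_iff_ae_eq_zero.2 ?_
  refine hcomplete u (Lp.memLp u) fun i => ?_
  have hi := (Submodule.mem_orthogonal _ u).1 hu _ (Submodule.subset_span ⟨i, rfl⟩)
  rw [L2.inner_def] at hi
  rw [← hi]
  refine integral_congr_ae ?_
  filter_upwards [(hg i).coeFn_toLp] with t ht
  rw [ht, RCLike.inner_apply, mul_comm]

end L2

section GlidingHump

variable {𝕜 : Type*} [RCLike 𝕜] {E : Type*} [NormedAddCommGroup E] [InnerProductSpace 𝕜 E]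

theorem Orthonormal.tendsto_inner_atTop {R : ℕ → E} (hR : Orthonormal 𝕜 R) (v : E) :
    Tendsto (fun M => ⟪v, R M⟫_𝕜) atTop (𝓝 0) := by
  have hsq := (hR.inner_products_summable v).tendsto_atTop_zero
  rw [tendsto_zero_iff_norm_tendsto_zero]
  simpa [norm_inner_symm] using
    (hsq.sqrt).congr fun M => Real.sqrt_sq (norm_nonneg _)

theorem Orthonormal.norm_sum_smul_sq {ι : Type*} {v : ι → E} (hv : Orthonormal 𝕜 v)
    (s : Finset ι) (c : ι → 𝕜) : ‖∑ i ∈ s, c i • v i‖ ^ 2 = ∑ i ∈ s, ‖c i‖ ^ 2 := by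
  simpa using hv.orthogonalFamily.norm_sum c s

theorem HilbertBasis.eventually_norm_sub_sum_Ico_lt (b : HilbertBasis ℕ 𝕜 E) {R : ℕ → E}
    (hR : Orthonormal 𝕜 R) (K : ℕ) {ε : ℝ} (hε : 0 < ε) :
    ∀ᶠ M in atTop, ∀ᶠ K' in atTop,
      ‖R M - ∑ i ∈ Finset.Ico K K', ⟪b i, R M⟫_𝕜 • b i‖ < ε := by
  let partialSum (M K : ℕ) : E := ∑ i ∈ Finset.range K, ⟪b i, R M⟫_𝕜 • b i
  have hhead : Tendsto (fun M => partialSum M K) atTop (𝓝 0) := by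
    simpa using tendsto_finsetSum (Finset.range K)
      fun i _ => (hR.tendsto_inner_atTop (b i)).smul_const (b i)
  filter_upwards [(tendsto_norm_zero.comp hhead).eventually_lt_const (half_pos hε)] with M hM
  have htail : Tendsto (partialSum M) atTop (𝓝 (R M)) := by
    simpa [b.repr_apply_apply] using (b.hasSum_repr (R M)).tendsto_sum_nat
  filter_upwards [eventually_ge_atTop K,
    (tendsto_iff_norm_sub_tendsto_zero.1 htail).eventually_lt_const (half_pos hε)] with K' hK hK'
  have hsplit : R M - ∑ i ∈ Finset.Ico K K', ⟪b i, R M⟫_𝕜 • b i =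
      partialSum M K - (partialSum M K' - R M) := by
    simp only [partialSum, ← Finset.sum_range_add_sum_Ico _ hK]
    abel
  calc _ ≤ ‖partialSum M K‖ + ‖partialSum M K' - R M‖ := hsplit ▸ norm_sub_le _ _
    _ < ε / 2 + ε / 2 := add_lt_add hM hK'
    _ = ε := add_halves ε

theorem HilbertBasis.exists_glidingHump (b : HilbertBasis ℕ 𝕜 E) {R : ℕ → E}
    (hR : Orthonormal 𝕜 R) {ε : ℝ} (hε : 0 < ε) :
    ∃ m : ℕ → ℕ, StrictMono m ∧ ∃ a : ℕ → ℕ, Monotone a ∧ ∀ k,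
      ‖R (m k) - ∑ i ∈ Finset.Ico (a k) (a (k + 1)), ⟪b i, R (m k)⟫_𝕜 • b i‖ < ε := by
  have hstep : ∀ K B : ℕ, ∃ M K', B ≤ M ∧ K ≤ K' ∧
      ‖R M - ∑ i ∈ Finset.Ico K K', ⟪b i, R M⟫_𝕜 • b i‖ < ε := by
    intro K B
    obtain ⟨M, hBM, hM⟩ :=
      ((eventually_ge_atTop B).and (b.eventually_norm_sub_sum_Ico_lt hR K hε)).exists
    obtain ⟨K', hKK', hK'⟩ := ((eventually_ge_atTop K).and hM).exists
    exact ⟨M, K', hBM, hKK', hK'⟩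
  choose M K' hBM hKK' happrox using hstep
  -- the state after `k` steps is the pair (start of the `k`-th block, lower bound for `m k`)
  let state : ℕ → ℕ × ℕ := fun k => (fun p => (K' p.1 p.2, M p.1 p.2 + 1))^[k] (0, 0)
  have hsucc (k : ℕ) : state (k + 1) = (K' (state k).1 (state k).2, M (state k).1 (state k).2 + 1) :=
    Function.iterate_succ_apply' _ _ _
  refine ⟨fun k => M (state k).1 (state k).2, strictMono_nat_of_lt_succ fun k => ?_,
    fun k => (state k).1, monotone_nat_of_le_succ fun k => ?_, fun k => ?_⟩
  · simpa only [hsucc, Nat.succ_le_iff] using hBM (state (k + 1)).1 (state (k + 1)).2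
  · simpa only [hsucc] using hKK' (state k).1 (state k).2
  · simpa only [hsucc] using happrox (state k).1 (state k).2

variable {X Y : Type*} [NormedAddCommGroup X] [NormedSpace 𝕜 X]
  [NormedAddCommGroup Y] [NormedSpace 𝕜 Y]

theorem Orthonormal.lowerEstimate_blocks {ι κ : Type*} [DecidableEq ι] [Fintype κ]
    {v : ι → E} (hv : Orthonormal 𝕜 v) (B : E →L[𝕜] X →L[𝕜] Y) {c : ℝ}
    (hlower : ∀ (s : Finset ι) (y : ι → X),
      c * ∑ i ∈ s, ‖y i‖ ^ 2 ≤ ‖∑ i ∈ s, B (v i) (y i)‖ ^ 2)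
    {I : κ → Finset ι} (hI : Pairwise (Disjoint on I)) (d : κ → ι → 𝕜) (x : κ → X) :
    c * ∑ j, ‖∑ i ∈ I j, d j i • v i‖ ^ 2 * ‖x j‖ ^ 2 ≤
      ‖∑ j, B (∑ i ∈ I j, d j i • v i) (x j)‖ ^ 2 := by
  set y : ι → X := fun i => ∑ j, if i ∈ I j then d j i • x j else 0
  have hy : ∀ j, ∀ i ∈ I j, y i = d j i • x j := fun j i hi => by
    simp only [y]
    rw [Finset.sum_eq_single j (fun k _ hkj => if_neg fun hik =>
      Finset.disjoint_left.1 (hI hkj) hik hi) (by simp), if_pos hi]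
  have h := hlower (Finset.univ.biUnion I) y
  rw [Finset.sum_biUnion (hI.set_pairwise _), Finset.sum_biUnion (hI.set_pairwise _)] at h
  convert h using 2
  · refine Finset.sum_congr rfl fun j _ => ?_
    rw [hv.norm_sum_smul_sq, Finset.sum_mul]
    exact Finset.sum_congr rfl fun i hi => by rw [hy j i hi, norm_smul, mul_pow]
  · congr 1
    refine Finset.sum_congr rfl fun j _ => ?_
    simp only [map_sum, map_smul, sum_apply, smul_apply]
    exact Finset.sum_congr rfl fun i hi => by rw [hy j i hi, map_smul]

theorem HilbertBasis.exists_injective_lowerEstimate_approx (b : HilbertBasis ℕ 𝕜 E)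
    {R : ℕ → E} (hR : Orthonormal 𝕜 R) (B : E →L[𝕜] X →L[𝕜] Y) {c : ℝ} (hc : 0 ≤ c)
    (hlower : ∀ (s : Finset ℕ) (y : ℕ → X),
      c * ∑ i ∈ s, ‖y i‖ ^ 2 ≤ ‖∑ i ∈ s, B (b i) (y i)‖ ^ 2)
    {n : ℕ} (x : Fin n → X) {ε : ℝ} (hε : 0 < ε) (hε1 : ε ≤ 1) :
    ∃ q : Fin n → ℕ, Injective q ∧ c * ((1 - ε) ^ 2 * ∑ j, ‖x j‖ ^ 2) ≤
      (‖∑ j, B (R (q j)) (x j)‖ + ε * ‖B‖ * ∑ j, ‖x j‖) ^ 2 := by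
  obtain ⟨m, hm, a, ha, happrox⟩ := b.exists_glidingHump hR hε
  set G : Fin n → E := fun j => ∑ i ∈ Finset.Ico (a j) (a (j + 1)), ⟪b i, R (m j)⟫_𝕜 • b i
  have hG (j : Fin n) : 1 - ε ≤ ‖G j‖ := by
    have htri := norm_le_norm_add_norm_sub' (R (m j)) (G j)
    have hclose : ‖R (m j) - G j‖ < ε := happrox j
    rw [hR.norm_eq_one] at htri
    linarith
  have hdisj : Pairwise (Disjoint on fun j : Fin n => Finset.Ico (a j) (a (j + 1))) :=
    fun j k hjk => Finset.disjoint_coe.1 <| by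
      simpa using ha.pairwise_disjoint_on_Ico_succ (Fin.val_injective.ne hjk)
  have hupper :
      ‖∑ j, B (G j) (x j)‖ ≤ ‖∑ j : Fin n, B (R (m j)) (x j)‖ + ε * ‖B‖ * ∑ j, ‖x j‖ := by
    have hsplit : ∑ j, B (G j) (x j) =
        ∑ j : Fin n, B (R (m j)) (x j) - ∑ j : Fin n, B (R (m j) - G j) (x j) := by
      simp [← Finset.sum_sub_distrib]
    rw [hsplit, Finset.mul_sum]
    refine (norm_sub_le _ _).trans ?_
    gcongr
    refine (norm_sum_le _ _).trans (Finset.sum_le_sum fun j _ => ?_)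
    calc ‖B (R (m j) - G j) (x j)‖ ≤ ‖B‖ * ‖R (m j) - G j‖ * ‖x j‖ := B.le_opNorm₂ _ _
      _ ≤ ‖B‖ * ε * ‖x j‖ := by gcongr; exact (happrox j).le
      _ = ε * ‖B‖ * ‖x j‖ := by ring
  refine ⟨fun j => m j, hm.injective.comp Fin.val_injective, ?_⟩
  calc c * ((1 - ε) ^ 2 * ∑ j, ‖x j‖ ^ 2) ≤ c * ∑ j, ‖G j‖ ^ 2 * ‖x j‖ ^ 2 := by
        rw [Finset.mul_sum]
        gcongr with j
        exact hG j
    _ ≤ ‖∑ j, B (G j) (x j)‖ ^ 2 := b.orthonormal.lowerEstimate_blocks B hlower hdisj _ x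
    _ ≤ _ := by gcongr

theorem HilbertBasis.lowerEstimate_of_spreading (b : HilbertBasis ℕ 𝕜 E)
    {R : ℕ → E} (hR : Orthonormal 𝕜 R) (B : E →L[𝕜] X →L[𝕜] Y) {c : ℝ} (hc : 0 ≤ c)
    (hlower : ∀ (s : Finset ℕ) (y : ℕ → X),
      c * ∑ i ∈ s, ‖y i‖ ^ 2 ≤ ‖∑ i ∈ s, B (b i) (y i)‖ ^ 2)
    {n : ℕ} (x : Fin n → X)
    (hspread : ∀ q : Fin n → ℕ, Injective q →
      ‖∑ j, B (R (q j)) (x j)‖ = ‖∑ j : Fin n, B (R j) (x j)‖) :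
    c * ∑ j, ‖x j‖ ^ 2 ≤ ‖∑ j : Fin n, B (R j) (x j)‖ ^ 2 := by
  set V := ‖∑ j : Fin n, B (R j) (x j)‖
  have hε : ∀ ε ∈ Set.Ioo (0 : ℝ) 1,
      c * ((1 - ε) ^ 2 * ∑ j, ‖x j‖ ^ 2) ≤ (V + ε * ‖B‖ * ∑ j, ‖x j‖) ^ 2 := by
    rintro ε ⟨hε0, hε1⟩
    obtain ⟨q, hq, h⟩ := b.exists_injective_lowerEstimate_approx hR B hc hlower x hε0 hε1.le
    rwa [hspread q hq] at h
  refine le_of_tendsto_of_tendsto ?_ ?_ (mem_of_superset (Ioo_mem_nhdsGT one_pos) hε)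
  · have hcont : Continuous fun ε : ℝ => c * ((1 - ε) ^ 2 * ∑ j, ‖x j‖ ^ 2) := by fun_prop
    simpa using (hcont.continuousWithinAt (s := Set.Ioi 0) (x := 0)).tendsto
  · have hcont : Continuous fun ε : ℝ => (V + ε * ‖B‖ * ∑ j, ‖x j‖) ^ 2 := by fun_prop
    simpa using (hcont.continuousWithinAt (s := Set.Ioi 0) (x := 0)).tendsto

end GlidingHump

section Rademacher

variable {H : Type*} [MeasurableSpace H] {μ : Measure H}

theorem ae_eq_one_or_eq_neg_one [IsProbabilityMeasure μ] {g : H → ℝ} (hg : Measurable g)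
    (h1 : μ {t | g t = 1} = 1 / 2) (h2 : μ {t | g t = -1} = 1 / 2) :
    ∀ᵐ t ∂μ, g t = 1 ∨ g t = -1 := by
  have hdisj : Disjoint {t | g t = 1} {t | g t = -1} :=
    Set.disjoint_left.2 fun t (ht1 : g t = 1) (ht2 : g t = -1) => by linarith
  have hmeas := (hg (measurableSet_singleton 1)).union (hg (measurableSet_singleton (-1)))
  have hfull : μ ({t | g t = 1} ∪ {t | g t = -1}) = μ Set.univ := by
    rw [measure_union hdisj (hg (measurableSet_singleton _)), h1, h2, ENNReal.add_halves,
      measure_univ]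
  exact (ae_iff_measure_eq hmeas.nullMeasurableSet).2 hfull

theorem map_eq_of_measure_eq_half [IsProbabilityMeasure μ] {g : H → ℝ} (hg : Measurable g)
    (h1 : μ {t | g t = 1} = 1 / 2) (h2 : μ {t | g t = -1} = 1 / 2) :
    μ.map g = (1 / 2 : ENNReal) • Measure.dirac 1 + (1 / 2 : ENNReal) • Measure.dirac (-1) := by
  rw [(Measure.ae_eq_or_eq_iff_map_eq_dirac_add_dirac hg.aemeasurable (by norm_num)).1
    (ae_eq_one_or_eq_neg_one hg h1 h2)]
  exact congrArg₂ (· • Measure.dirac (1 : ℝ) + · • Measure.dirac (-1 : ℝ)) h1 h2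

theorem ProbabilityTheory.iIndepFun.map_comp_eq_pi {ι κ β : Type*} [Fintype κ]
    [MeasurableSpace β] {r : ι → H → β} (hr : iIndepFun r μ) (hmeas : ∀ i, AEMeasurable (r i) μ)
    {ν : Measure β} (hlaw : ∀ i, μ.map (r i) = ν) {q : κ → ι} (hq : Injective q) :
    μ.map (fun t j => r (q j) t) = Measure.pi fun _ => ν := by
  rw [(hr.precomp hq).map_fun_eq_pi_map fun j => hmeas (q j)]
  simp_rw [hlaw]

theorem ProbabilityTheory.iIndepFun.integral_comp_eq_of_injective {ι κ β E : Type*} [Fintype κ]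
    [MeasurableSpace β] [NormedAddCommGroup E] [NormedSpace ℝ E] {r : ι → H → β}
    (hr : iIndepFun r μ) (hmeas : ∀ i, AEMeasurable (r i) μ) {ν : Measure β}
    (hlaw : ∀ i, μ.map (r i) = ν) {Φ : (κ → β) → E} (hΦ : StronglyMeasurable Φ)
    {q q' : κ → ι} (hq : Injective q) (hq' : Injective q') :
    ∫ t, Φ (fun j => r (q j) t) ∂μ = ∫ t, Φ (fun j => r (q' j) t) ∂μ := by
  rw [← integral_map (aemeasurable_pi_lambda _ fun j => hmeas (q j)) hΦ.aestronglyMeasurable,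
    ← integral_map (aemeasurable_pi_lambda _ fun j => hmeas (q' j)) hΦ.aestronglyMeasurable,
    hr.map_comp_eq_pi hmeas hlaw hq, hr.map_comp_eq_pi hmeas hlaw hq']

end Rademacher

theorem rademacher_lower_of_cons_lower_general
    {H : Type*} [MeasurableSpace H] (μ : Measure H) [IsProbabilityMeasure μ]
    {X : Type*} [NormedAddCommGroup X] [NormedSpace ℂ X]
    (f : ℕ → H → ℂ) (hfmem : ∀ i, MemLp (f i) 2 μ)
    (hforth : ∀ i j, ∫ t, f i t * (starRingEnd ℂ) (f j t) ∂μ = if i = j then 1 else 0)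
    (hfcomplete : ∀ g : H → ℂ, MemLp g 2 μ →
      (∀ i, ∫ t, g t * (starRingEnd ℂ) (f i t) ∂μ = 0) → g =ᵐ[μ] 0)
    (r : ℕ → H → ℝ) (hrmeas : ∀ i, Measurable (r i))
    (hrindep : ProbabilityTheory.iIndepFun r μ)
    (hrdist : ∀ i, μ {t | r i t = 1} = 1/2 ∧ μ {t | r i t = -1} = 1/2)
    (hrorth : ∀ i j, ∫ t, r i t * r j t ∂μ = if i = j then 1 else 0)
    (C : ℝ) (hC : 0 < C)
    (hlower : ∀ (n : ℕ) (x : Fin n → X),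
      C⁻¹ * ∑ i, ‖x i‖ ^ 2 ≤ ∫ t, ‖∑ i : Fin n, f i.val t • x i‖ ^ 2 ∂μ) :
    ∀ (n : ℕ) (x : Fin n → X),
      C⁻¹ * ∑ i, ‖x i‖ ^ 2 ≤ ∫ t, ‖∑ i : Fin n, r i.val t • x i‖ ^ 2 ∂μ := by
  intro n x
  have hρ (i : ℕ) : MemLp (fun t => (r i t : ℂ)) 2 μ := by
    refine MemLp.of_bound (Complex.measurable_ofReal.comp (hrmeas i)).aestronglyMeasurable 1 ?_
    filter_upwards [ae_eq_one_or_eq_neg_one (hrmeas i) (hrdist i).1 (hrdist i).2] with t ht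
    rcases ht with ht | ht <;> simp [ht]
  let R : ℕ → Lp ℂ 2 μ := fun i => (hρ i).toLp fun t => (r i t : ℂ)
  have hR : Orthonormal ℂ R := orthonormal_toLp hρ fun i j => by
    simp_rw [Complex.conj_ofReal, ← Complex.ofReal_mul, integral_complex_ofReal, hrorth]
    split_ifs <;> simp
  let b := HilbertBasis.mkOfOrthogonalEqBot (orthonormal_toLp hfmem hforth)
    (orthogonal_span_range_toLp_eq_bot hfmem hfcomplete)
  have hb : ⇑b = fun i => (hfmem i).toLp (f i) := HilbertBasis.coe_mkOfOrthogonalEqBot _ _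
  have hnorm (q : Fin n → ℕ) :
      ‖∑ j, lpTmul ℂ μ 2 (R (q j)) (x j)‖ ^ 2 = ∫ t, ‖∑ j, r (q j) t • x j‖ ^ 2 ∂μ := by
    simp [R, norm_sq_sum_lpTmul _ _ _ fun j => (hρ (q j)).coeFn_toLp, Complex.coe_smul]
  have key := b.lowerEstimate_of_spreading hR (lpTmul ℂ μ 2) (inv_nonneg.2 hC.le)
    (fun s y => ?lower) x fun q hq => ?spread
  · rwa [hnorm Fin.val] at key
  case lower =>
    rw [hb, norm_sq_sum_lpTmul s _ f fun i => (hfmem i).coeFn_toLp]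
    exact lowerEstimate_finset_of_fin hlower s y
  case spread =>
    refine (sq_eq_sq₀ (norm_nonneg _) (norm_nonneg _)).1 ?_
    rw [hnorm q, hnorm Fin.val]
    exact hrindep.integral_comp_eq_of_injective (fun i => (hrmeas i).aemeasurable)
      (fun i => map_eq_of_measure_eq_half (hrmeas i) (hrdist i).1 (hrdist i).2)
      (by fun_prop : Continuous fun y : Fin n → ℝ => ‖∑ j, y j • x j‖ ^ 2).stronglyMeasurable
      hq Fin.val_injective

/-- Let `(H, μ)` be a probability space, `(fᵢ)` a complete orthonormal
system in `L²(H)`, and `(rᵢ)` a Rademacher system on `H`.  If for some `C > 0` all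
finite collections `x₁,…,xₙ` in a Banach space `X` satisfy
`C⁻¹ ∑ ‖xᵢ‖² ≤ ∫ ‖∑ fᵢ(t) • xᵢ‖² dμ`, then also
`C⁻¹ ∑ ‖xᵢ‖² ≤ ∫ ‖∑ rᵢ(t) • xᵢ‖² dμ` for all finite collections. -/
theorem rademacher_lower_of_cons_lower
    {H : Type*} [MeasurableSpace H] (μ : Measure H) [IsProbabilityMeasure μ]
    {X : Type*} [NormedAddCommGroup X] [NormedSpace ℂ X] [CompleteSpace X]
    (f : ℕ → H → ℂ) (hfmem : ∀ i, MemLp (f i) 2 μ)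
    (hforth : ∀ i j, ∫ t, f i t * (starRingEnd ℂ) (f j t) ∂μ = if i = j then 1 else 0)
    (hfcomplete : ∀ g : H → ℂ, MemLp g 2 μ →
      (∀ i, ∫ t, g t * (starRingEnd ℂ) (f i t) ∂μ = 0) → g =ᵐ[μ] 0)
    (r : ℕ → H → ℝ) (hrmeas : ∀ i, Measurable (r i))
    (hrindep : ProbabilityTheory.iIndepFun r μ)
    (hrdist : ∀ i, μ {t | r i t = 1} = 1/2 ∧ μ {t | r i t = -1} = 1/2)
    (hrorth : ∀ i j, ∫ t, r i t * r j t ∂μ = if i = j then 1 else 0)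
    (C : ℝ) (hC : 0 < C)
    (hlower : ∀ (n : ℕ) (x : Fin n → X),
      C⁻¹ * ∑ i, ‖x i‖ ^ 2 ≤ ∫ t, ‖∑ i : Fin n, f i.val t • x i‖ ^ 2 ∂μ) :
    ∀ (n : ℕ) (x : Fin n → X),
      C⁻¹ * ∑ i, ‖x i‖ ^ 2 ≤ ∫ t, ‖∑ i : Fin n, r i.val t • x i‖ ^ 2 ∂μ :=
  rademacher_lower_of_cons_lower_general μ f hfmem hforth hfcomplete r hrmeas hrindep hrdist hrorth
    C hC hlower
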